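/- Fix 0 < β ≤ log 4 and set K_c^{(2)}(β) := 1/(4βe^{−β}) + 1/(2β) = 1/(2β c_β''(0)). Then: (a) for 0 < K < K_c^{(2)}(β), G_{β,K}''(0) = 2βK(1 − K/K_c^{(2)}(β)) > 0; (b) for K = K_c^{(2)}(β): G_{β,K}''(0) = 0, and if β < log 4 then G_{β,K}^{(4)}(0) = −(2βK)⁴ c_β^{(4)}(0) > 0, while if β = log 4 then G_{β,K}^{(4)}(0) = 0 and G_{β,K}^{(6)}(0) = 2(2βK)⁶/9 > 0; (c) for K > K_c^{(2)}(β), every nonzero global minimum point z of G_{β,K} over ℝ satisfies G_{β,K}''(z) > 0. -/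

import Mathlib

/-!
Write `a = e^{-β}`, so that `c_β(t) = log (1 + 2a cosh t) - log (1 + 2a)`. With
`v = 1 / (1 + 2a cosh t)` and `u = c_β' = 2a sinh t · v` one has the closed system
`v' = -u v`, `u' = v + (4a² - 1) v²`, `u² = 1 - 2v - (4a² - 1) v²`. Hence the odd derivatives
of `c_β` are `u` times polynomials in `v` and the even ones are polynomials in `v`; as
`u(0) = 0`, `c_β^{(2k+2)}(0) = c_β''(0) · Q_k(v(0))` where `c_β^{(2k+1)} = u · Q_k(v)`, and all
the values at `0` follow.

Since `G^{(n)}(z) = -(2βK)^n c_β^{(n)}(2βKz)` for `n ≥ 3`, part (c) reduces to two facts: at a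
minimum `G'' ≥ 0`, and `G'' = 0` forces `G''' = 0` (otherwise `G'` is negative on one side of
the minimum); while `c_β''' = -u v (1 + 2(4a² - 1) v)` vanishes only at `0` when `a ≥ 1/4`,
i.e. when `β ≤ log 4`.
-/
noncomputable section

/-- `c_β(t) = log[(1 + e^{−β}(e^t + e^{−t}))/(1 + 2e^{−β})]`. -/
def cBeta (β t : ℝ) : ℝ :=
  Real.log ((1 + Real.exp (-β) * (Real.exp t + Real.exp (-t))) / (1 + 2 * Real.exp (-β)))

/-- `G_{β,K}(z) = βK z² − c_β(2βK z)`. -/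
def Gfun (β K z : ℝ) : ℝ := β * K * z ^ 2 - cBeta β (2 * β * K * z)

/-- The second-order critical value `K_c^{(2)}(β) = 1/(4βe^{−β}) + 1/(2β)`. -/
def Kc2 (β : ℝ) : ℝ := 1 / (4 * β * Real.exp (-β)) + 1 / (2 * β)

open Real Filter Topology Set Polynomial

section LocalMin

variable {f : ℝ → ℝ} {x : ℝ}

lemma eventually_nhdsGT_lt_of_deriv_neg (hf : Continuous f)
    (h : ∀ᶠ y in 𝓝[>] x, deriv f y < 0) : ∀ᶠ y in 𝓝[>] x, f y < f x := by
  obtain ⟨c, hxc, hc⟩ := (nhdsGT_basis x).eventually_iff.mp h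
  have hanti : StrictAntiOn f (Ico x c) :=
    strictAntiOn_of_deriv_neg (convex_Ico x c) hf.continuousOn
      (fun y hy => hc (by rwa [interior_Ico] at hy))
  filter_upwards [Ioo_mem_nhdsGT hxc] with y hy
  exact hanti (left_mem_Ico.mpr hxc) (Ioo_subset_Ico_self hy) hy.1

lemma IsLocalMin.iteratedDeriv_two_nonneg (h : IsLocalMin f x) (hf : ContinuousAt f x) :
    0 ≤ iteratedDeriv 2 f x := by
  by_contra! hneg
  rw [iteratedDeriv_succ, iteratedDeriv_one] at hneg
  have hmax : IsLocalMax f x := isLocalMax_of_deriv_deriv_neg hneg h.deriv_eq_zero hf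
  have hconst : f =ᶠ[𝓝 x] fun _ => f x := by
    filter_upwards [h, hmax] with y hmin hmax using le_antisymm hmax hmin
  have h2 := hconst.iteratedDeriv_eq 2
  rw [iteratedDeriv_const, if_neg two_ne_zero, iteratedDeriv_succ, iteratedDeriv_one] at h2
  exact hneg.ne h2

lemma IsLocalMin.not_iteratedDeriv_three_neg (hf : ContDiff ℝ 3 f) (h : IsLocalMin f x)
    (h2 : iteratedDeriv 2 f x = 0) : ¬ iteratedDeriv 3 f x < 0 := by
  intro h3
  rw [iteratedDeriv_succ, iteratedDeriv_succ, iteratedDeriv_one] at h3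
  rw [iteratedDeriv_succ, iteratedDeriv_one] at h2
  have hf'' : ∀ᶠ y in 𝓝[>] x, deriv (deriv f) y < 0 :=
    deriv_neg_right_of_sign_deriv
      (nhdsWithin_le_nhds (eventually_nhdsWithin_sign_eq_of_deriv_neg h3 h2))
  have hf' : ∀ᶠ y in 𝓝[>] x, deriv f y < 0 := by
    simpa only [h.deriv_eq_zero] using
      eventually_nhdsGT_lt_of_deriv_neg (hf.continuous_deriv (by norm_num)) hf''
  have hlt := eventually_nhdsGT_lt_of_deriv_neg hf.continuous hf'
  obtain ⟨y, hy, hy'⟩ := (hlt.and (nhdsWithin_le_nhds h)).exists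
  exact hy.not_ge hy'

lemma IsLocalMin.iteratedDeriv_three_eq_zero (hf : ContDiff ℝ 3 f) (h : IsLocalMin f x)
    (h2 : iteratedDeriv 2 f x = 0) : iteratedDeriv 3 f x = 0 := by
  refine le_antisymm ?_ (not_lt.mp (h.not_iteratedDeriv_three_neg hf h2))
  have hmin : IsLocalMin (fun y => f (-y)) (-x) :=
    IsLocalMin.comp_continuous (by rwa [neg_neg]) continuous_neg.continuousAt
  have hf_neg : ContDiff ℝ 3 (fun y => f (-y)) := hf.comp contDiff_neg
  have := hmin.not_iteratedDeriv_three_neg hf_neg (by simp [iteratedDeriv_comp_neg, h2])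
  simp only [iteratedDeriv_comp_neg, neg_neg] at this
  norm_num at this
  linarith

end LocalMin

namespace LogCosh

variable (a : ℝ)

def den (t : ℝ) : ℝ := 1 + 2 * a * cosh t

def v (t : ℝ) : ℝ := (den a t)⁻¹

def u (t : ℝ) : ℝ := 2 * a * sinh t * v a t

def stepToOdd (P : ℝ[X]) : ℝ[X] := -X * derivative P

/-- From `(u · Q(v))' = (v + (4a² - 1)v²) Q(v) - u² v Q'(v)` and `u² = 1 - 2v - (4a² - 1)v²`.
-/
def stepToEven (Q : ℝ[X]) : ℝ[X] :=
  (X + C (4 * a ^ 2 - 1) * X ^ 2) * Q - (1 - 2 * X - C (4 * a ^ 2 - 1) * X ^ 2) * X * derivative Q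

def oddDerivPoly : ℕ → ℝ[X]
  | 0 => 1
  | k + 1 => stepToOdd (stepToEven a (oddDerivPoly k))

lemma eval_oddDerivPoly_one (w : ℝ) :
    (oddDerivPoly a 1).eval w = -w * (1 + 2 * (4 * a ^ 2 - 1) * w) := by
  simp only [oddDerivPoly, stepToOdd, stepToEven, mul_one, derivative_one, mul_zero, sub_zero,
    derivative_add, derivative_X, derivative_C_mul_X_pow, eval_mul, eval_neg, eval_X, eval_add,
    eval_one, eval_C, eval_pow]
  ring

variable {a} (ha : 0 ≤ a) (t : ℝ)
include ha

lemma den_pos : 0 < den a t := by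
  unfold den
  positivity

lemma hasDerivAt_v : HasDerivAt (v a) (-(u a t * v a t)) t := by
  have h := (((hasDerivAt_cosh t).const_mul (2 * a)).const_add 1).inv (den_pos ha t).ne'
  refine h.congr_deriv ?_
  simp only [u, v, den]
  field_simp

lemma hasDerivAt_u : HasDerivAt (u a) (v a t + (4 * a ^ 2 - 1) * v a t ^ 2) t := by
  have h := ((hasDerivAt_sinh t).const_mul (2 * a)).mul (hasDerivAt_v ha t)
  refine h.congr_deriv ?_
  have hd := (den_pos ha t).ne'
  simp only [u, v, den] at hd ⊢
  field_simp
  rw [sinh_sq]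
  ring

lemma u_sq : u a t ^ 2 = 1 - 2 * v a t - (4 * a ^ 2 - 1) * v a t ^ 2 := by
  have hd := (den_pos ha t).ne'
  simp only [u, v, den] at hd ⊢
  field_simp
  rw [sinh_sq]
  ring

lemma hasDerivAt_eval_v (P : ℝ[X]) :
    HasDerivAt (fun s => P.eval (v a s)) (u a t * (stepToOdd P).eval (v a t)) t := by
  refine ((P.hasDerivAt (v a t)).comp t (hasDerivAt_v ha t)).congr_deriv ?_
  simp only [stepToOdd, eval_mul, eval_neg, eval_X]
  ring

lemma hasDerivAt_u_mul_eval_v (Q : ℝ[X]) :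
    HasDerivAt (fun s => u a s * Q.eval (v a s)) ((stepToEven a Q).eval (v a t)) t := by
  refine ((hasDerivAt_u ha t).mul (hasDerivAt_eval_v ha t Q)).congr_deriv ?_
  have hu := u_sq ha t
  simp only [stepToEven, stepToOdd, eval_mul, eval_sub, eval_add, eval_neg, eval_X, eval_C,
    eval_pow, eval_one, eval_ofNat] at hu ⊢
  linear_combination (-(v a t * (derivative Q).eval (v a t))) * hu

lemma deriv_eval_v (P : ℝ[X]) :
    deriv (fun s => P.eval (v a s)) = fun t => u a t * (stepToOdd P).eval (v a t) :=
  funext fun t => (hasDerivAt_eval_v ha t P).deriv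

lemma deriv_u_mul_eval_v (Q : ℝ[X]) :
    deriv (fun s => u a s * Q.eval (v a s)) = fun t => (stepToEven a Q).eval (v a t) :=
  funext fun t => (hasDerivAt_u_mul_eval_v ha t Q).deriv

lemma eval_stepToEven_v_zero (Q : ℝ[X]) :
    (stepToEven a Q).eval (v a 0) = 2 * a / (1 + 2 * a) * Q.eval (1 + 2 * a)⁻¹ := by
  have hu := u_sq ha 0
  have hv : v a 0 = (1 + 2 * a)⁻¹ := by simp [v, den]
  simp only [u, sinh_zero, mul_zero, zero_mul] at hu
  simp only [stepToEven, eval_mul, eval_sub, eval_add, eval_X, eval_C, eval_pow, eval_one,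
    eval_ofNat, ← hu]
  rw [hv]
  have : 0 < 1 + 2 * a := by positivity
  field_simp
  ring

variable {f : ℝ → ℝ} (hf : ∀ t, HasDerivAt f (u a t) t)
include hf

lemma iteratedDeriv_odd (k : ℕ) :
    iteratedDeriv (2 * k + 1) f = fun t => u a t * (oddDerivPoly a k).eval (v a t) := by
  induction k with
  | zero => simpa [oddDerivPoly] using funext fun t => (hf t).deriv
  | succ k ih =>
    rw [show 2 * (k + 1) + 1 = 2 * k + 1 + 1 + 1 by ring, iteratedDeriv_succ, iteratedDeriv_succ,
      ih, deriv_u_mul_eval_v ha, deriv_eval_v ha, oddDerivPoly]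

lemma iteratedDeriv_even (k : ℕ) :
    iteratedDeriv (2 * k + 2) f = fun t => (stepToEven a (oddDerivPoly a k)).eval (v a t) := by
  rw [iteratedDeriv_succ, iteratedDeriv_odd ha hf, deriv_u_mul_eval_v ha]

lemma iteratedDeriv_even_zero (k : ℕ) :
    iteratedDeriv (2 * k + 2) f 0 =
      2 * a / (1 + 2 * a) * (oddDerivPoly a k).eval (1 + 2 * a)⁻¹ := by
  rw [iteratedDeriv_even ha hf]
  exact eval_stepToEven_v_zero ha _

lemma iteratedDeriv_two_zero : iteratedDeriv 2 f 0 = 2 * a / (1 + 2 * a) := by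
  simpa [oddDerivPoly] using iteratedDeriv_even_zero ha hf 0

lemma iteratedDeriv_four_zero :
    iteratedDeriv 4 f 0 = -(2 * a * (4 * a - 1) / (1 + 2 * a) ^ 2) := by
  rw [iteratedDeriv_even_zero ha hf 1, eval_oddDerivPoly_one]
  have : 0 < 1 + 2 * a := by positivity
  field_simp
  ring

lemma iteratedDeriv_three_ne_zero (ha4 : 1 / 4 ≤ a) {t : ℝ} (ht : t ≠ 0) :
    iteratedDeriv 3 f t ≠ 0 := by
  rw [iteratedDeriv_odd ha hf 1]
  dsimp only
  rw [eval_oddDerivPoly_one]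
  have hcosh : 1 < cosh t := one_lt_cosh.mpr ht
  have hden := den_pos ha t
  have hv : 0 < v a t := inv_pos.mpr hden
  have hu : u a t ≠ 0 := by
    simp only [u]
    have : sinh t ≠ 0 := sinh_ne_zero.mpr ht
    positivity
  have hfactor : 0 < 1 + 2 * (4 * a ^ 2 - 1) * v a t := by
    have hsplit :
        1 + 2 * (4 * a ^ 2 - 1) * v a t = (den a t + 2 * (4 * a ^ 2 - 1)) * v a t := by
      rw [add_mul, v, mul_inv_cancel₀ hden.ne']
    rw [hsplit]
    refine mul_pos ?_ hv
    simp only [den]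
    nlinarith
  rw [neg_mul, mul_neg, neg_ne_zero, ← mul_assoc]
  exact mul_ne_zero (mul_ne_zero hu hv.ne') hfactor.ne'

omit ha in
lemma iteratedDeriv_six_zero (h : a = 1 / 4) : iteratedDeriv 6 f 0 = -(2 / 9) := by
  subst h
  rw [iteratedDeriv_even_zero (by norm_num) hf 2]
  norm_num [oddDerivPoly, stepToOdd, stepToEven]

end LogCosh

lemma cBeta_eq_log_den (β : ℝ) :
    cBeta β = fun t => log (LogCosh.den (exp (-β)) t / (1 + 2 * exp (-β))) := by
  funext t
  rw [cBeta, LogCosh.den, cosh_eq]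
  ring_nf

lemma hasDerivAt_cBeta (β t : ℝ) : HasDerivAt (cBeta β) (LogCosh.u (exp (-β)) t) t := by
  have hden := LogCosh.den_pos (exp_pos (-β)).le t
  rw [cBeta_eq_log_den]
  refine ((((hasDerivAt_cosh t).const_mul (2 * exp (-β))).const_add 1).div_const
    (1 + 2 * exp (-β))).log (by positivity) |>.congr_deriv ?_
  simp only [LogCosh.u, LogCosh.v, LogCosh.den] at hden ⊢
  field_simp

lemma contDiff_cBeta (β : ℝ) {n : WithTop ℕ∞} : ContDiff ℝ n (cBeta β) := by
  rw [cBeta_eq_log_den]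
  exact (by unfold LogCosh.den; fun_prop : ContDiff ℝ n _).log
    fun t => (div_pos (LogCosh.den_pos (exp_pos (-β)).le t) (by positivity)).ne'

lemma iteratedDeriv_Gfun (β K z : ℝ) (n : ℕ) :
    iteratedDeriv n (Gfun β K) z =
      β * K * (Nat.descFactorial 2 n * z ^ (2 - n)) -
        (2 * β * K) ^ n * iteratedDeriv n (cBeta β) (2 * β * K * z) := by
  have hc : ContDiff ℝ n (fun z => cBeta β (2 * β * K * z)) :=
    (contDiff_cBeta β).comp (contDiff_const.mul contDiff_id)
  change iteratedDeriv n (fun z => β * K * z ^ 2 - cBeta β (2 * β * K * z)) z = _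
  rw [iteratedDeriv_fun_sub (by fun_prop) hc.contDiffAt, iteratedDeriv_const_mul_field,
    iteratedDeriv_pow, iteratedDeriv_comp_const_mul (contDiff_cBeta β)]

lemma iteratedDeriv_two_Gfun (β K z : ℝ) :
    iteratedDeriv 2 (Gfun β K) z =
      2 * β * K - (2 * β * K) ^ 2 * iteratedDeriv 2 (cBeta β) (2 * β * K * z) := by
  rw [iteratedDeriv_Gfun]
  norm_num
  ring

lemma iteratedDeriv_Gfun_of_three_le (β K z : ℝ) {n : ℕ} (hn : 3 ≤ n) :
    iteratedDeriv n (Gfun β K) z =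
      -((2 * β * K) ^ n * iteratedDeriv n (cBeta β) (2 * β * K * z)) := by
  rw [iteratedDeriv_Gfun, Nat.descFactorial_eq_zero_iff_lt.mpr (by omega)]
  simp

lemma contDiff_Gfun (β K : ℝ) {n : WithTop ℕ∞} : ContDiff ℝ n (Gfun β K) :=
  (contDiff_const.mul (contDiff_id.pow 2)).sub
    ((contDiff_cBeta β).comp (contDiff_const.mul contDiff_id))

lemma iteratedDeriv_two_Gfun_zero {β : ℝ} (hβ : 0 < β) (K : ℝ) :
    iteratedDeriv 2 (Gfun β K) 0 = 2 * β * K * (1 - K / Kc2 β) := by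
  rw [iteratedDeriv_two_Gfun, mul_zero,
    LogCosh.iteratedDeriv_two_zero (exp_pos (-β)).le (hasDerivAt_cBeta β), Kc2]
  field_simp
  ring

lemma exp_neg_log_four : exp (-log 4) = 1 / 4 := by
  rw [exp_neg, exp_log (by norm_num)]
  norm_num

/-- Fix `0 < β ≤ log 4` and
`K_c^{(2)}(β) = 1/(4βe^{−β}) + 1/(2β) = 1/(2β c_β''(0))`.  Then:
(a) for `0 < K < K_c^{(2)}(β)`, `G_{β,K}''(0) = 2βK(1 − K/K_c^{(2)}(β)) > 0`;
(b) for `K = K_c^{(2)}(β)`: `G_{β,K}''(0) = 0`; if `β < log 4` then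
`G_{β,K}⁽⁴⁾(0) = −(2βK)⁴ c_β⁽⁴⁾(0) > 0`, while if `β = log 4` then `G_{β,K}⁽⁴⁾(0) = 0`
and `G_{β,K}⁽⁶⁾(0) = 2(2βK)⁶/9 > 0`;
(c) for `K > K_c^{(2)}(β)`, every nonzero global minimum point `z` of `G_{β,K}`
satisfies `G_{β,K}''(z) > 0`. -/
theorem Gfun_minimum_types_second_order (β : ℝ) (hβ0 : 0 < β) (hβ : β ≤ Real.log 4) :
    Kc2 β = 1 / (2 * β * iteratedDeriv 2 (cBeta β) 0) ∧
    (∀ K : ℝ, 0 < K → K < Kc2 β →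
      iteratedDeriv 2 (Gfun β K) 0 = 2 * β * K * (1 - K / Kc2 β) ∧
      0 < iteratedDeriv 2 (Gfun β K) 0) ∧
    (iteratedDeriv 2 (Gfun β (Kc2 β)) 0 = 0 ∧
      (β < Real.log 4 →
        iteratedDeriv 4 (Gfun β (Kc2 β)) 0 =
          -(2 * β * Kc2 β) ^ 4 * iteratedDeriv 4 (cBeta β) 0 ∧
        0 < iteratedDeriv 4 (Gfun β (Kc2 β)) 0) ∧
      (β = Real.log 4 →
        iteratedDeriv 4 (Gfun β (Kc2 β)) 0 = 0 ∧
        iteratedDeriv 6 (Gfun β (Kc2 β)) 0 = 2 * (2 * β * Kc2 β) ^ 6 / 9 ∧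
        0 < iteratedDeriv 6 (Gfun β (Kc2 β)) 0)) ∧
    (∀ K : ℝ, Kc2 β < K → ∀ z : ℝ, z ≠ 0 → IsMinOn (Gfun β K) Set.univ z →
      0 < iteratedDeriv 2 (Gfun β K) z) := by
  have hc := hasDerivAt_cBeta β
  have ha0 := (exp_pos (-β)).le
  have ha : 1 / 4 ≤ exp (-β) := exp_neg_log_four ▸ exp_le_exp.mpr (neg_le_neg hβ)
  have hKc2 : 0 < Kc2 β := by unfold Kc2; positivity
  have hκ : 0 < 2 * β * Kc2 β := by positivity
  refine ⟨?_, fun K hK hKlt => ?_, ⟨?_, fun hlt => ?_, fun heq => ?_⟩,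
    fun K hK z hz hmin => ?_⟩
  · rw [LogCosh.iteratedDeriv_two_zero ha0 hc, Kc2]
    field_simp
    ring
  · rw [iteratedDeriv_two_Gfun_zero hβ0]
    refine ⟨rfl, mul_pos (by positivity) (sub_pos.mpr ((div_lt_one hKc2).mpr hKlt))⟩
  · rw [iteratedDeriv_two_Gfun_zero hβ0, div_self hKc2.ne', sub_self, mul_zero]
  · have ha' : 1 / 4 < exp (-β) := exp_neg_log_four ▸ exp_lt_exp.mpr (neg_lt_neg hlt)
    rw [iteratedDeriv_Gfun_of_three_le _ _ _ (by norm_num), mul_zero, neg_mul]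
    refine ⟨rfl, neg_pos.mpr (mul_neg_of_pos_of_neg (by positivity) ?_)⟩
    rw [LogCosh.iteratedDeriv_four_zero ha0 hc, neg_neg_iff_pos]
    exact div_pos (mul_pos (by positivity) (by linarith)) (by positivity)
  · have ha' : exp (-β) = 1 / 4 := heq ▸ exp_neg_log_four
    rw [iteratedDeriv_Gfun_of_three_le _ _ _ (by norm_num),
      iteratedDeriv_Gfun_of_three_le _ _ _ (by norm_num), mul_zero,
      LogCosh.iteratedDeriv_four_zero ha0 hc, LogCosh.iteratedDeriv_six_zero hc ha', ha']
    refine ⟨by norm_num, by ring, by linarith [pow_pos hκ 6]⟩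
  · have hG := contDiff_Gfun β K (n := 3)
    have hloc := hmin.isLocalMin univ_mem
    refine (hloc.iteratedDeriv_two_nonneg hG.continuous.continuousAt).lt_of_ne' fun h2 => ?_
    have h3 := hloc.iteratedDeriv_three_eq_zero hG h2
    have hκ' : 2 * β * K ≠ 0 := (mul_pos (by positivity) (hKc2.trans hK)).ne'
    rw [iteratedDeriv_Gfun_of_three_le _ _ _ le_rfl, neg_eq_zero, mul_eq_zero] at h3
    exact h3.elim (pow_ne_zero _ hκ')
      (LogCosh.iteratedDeriv_three_ne_zero ha0 hc ha (mul_ne_zero hκ' hz))
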